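/- arXiv:1609.05660 — 6 statements merged into one kernel-verified Lean document; each statement's English description precedes it below -/
import Mathlib

section
/- Let q : (z₀,z₁) → (0,∞) be a C² function satisfying the ODE 2a²q³ + (q')² + q(2 − q'') = 0 for a constant a ≥ 0. Then the quantity (q')²/q² − 4(a²q − 1/q) is constant on (z₀,z₁). -/
theorem stmt_3 (z₀ z₁ a : ℝ) (ha : 0 ≤ a) (q q' q'' : ℝ → ℝ)
    (hqpos : ∀ z ∈ Set.Ioo z₀ z₁, 0 < q z)
    (hd1 : ∀ z ∈ Set.Ioo z₀ z₁, HasDerivAt q (q' z) z)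
    (hd2 : ∀ z ∈ Set.Ioo z₀ z₁, HasDerivAt q' (q'' z) z)
    (hode : ∀ z ∈ Set.Ioo z₀ z₁,
      2 * a ^ 2 * q z ^ 3 + (q' z) ^ 2 + q z * (2 - q'' z) = 0) :
    ∃ c : ℝ, ∀ z ∈ Set.Ioo z₀ z₁,
      (q' z) ^ 2 / (q z) ^ 2 - 4 * (a ^ 2 * q z - 1 / q z) = c := by
  set F : ℝ → ℝ := fun z => (q' z) ^ 2 / (q z) ^ 2 - 4 * (a ^ 2 * q z - 1 / q z) with hF
  have hderiv : ∀ z ∈ Set.Ioo z₀ z₁, HasDerivAt F 0 z := by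
    intro z hz
    have hq : q z ≠ 0 := (hqpos z hz).ne'
    have hq2 : (q z) ^ 2 ≠ 0 := pow_ne_zero _ hq
    have h1 : HasDerivAt (fun z => (q' z) ^ 2) (2 * q' z * q'' z) z := by
      have := (hd2 z hz).fun_pow 2
      simpa [mul_comm, mul_assoc, mul_left_comm] using this
    have h2 : HasDerivAt (fun z => (q z) ^ 2) (2 * q z * q' z) z := by
      have := (hd1 z hz).fun_pow 2
      simpa [mul_comm, mul_assoc, mul_left_comm] using this
    have hdivd : HasDerivAt (fun z => (q' z) ^ 2 / (q z) ^ 2)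
        ((2 * q' z * q'' z * (q z) ^ 2 - (q' z) ^ 2 * (2 * q z * q' z)) / ((q z) ^ 2) ^ 2) z :=
      h1.div h2 hq2
    have hinv : HasDerivAt (fun z => 1 / q z) ((0 * q z - 1 * q' z) / (q z) ^ 2) z :=
      (hasDerivAt_const z 1).div (hd1 z hz) hq
    have hrest : HasDerivAt (fun z => 4 * (a ^ 2 * q z - 1 / q z))
        (4 * (a ^ 2 * q' z - (0 * q z - 1 * q' z) / (q z) ^ 2)) z :=
      (((hd1 z hz).const_mul (a ^ 2)).sub hinv).const_mul 4
    have := hdivd.sub hrest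
    have hzero : (2 * q' z * q'' z * (q z) ^ 2 - (q' z) ^ 2 * (2 * q z * q' z)) / ((q z) ^ 2) ^ 2
        - 4 * (a ^ 2 * q' z - (0 * q z - 1 * q' z) / (q z) ^ 2) = 0 := by
      have hode' := hode z hz
      field_simp
      linear_combination (-2 * q' z) * hode'
    rw [hzero] at this
    exact this
  rcases Set.eq_empty_or_nonempty (Set.Ioo z₀ z₁) with he | ⟨x, hx⟩
  · exact ⟨0, fun z hz => absurd hz (by simp [he])⟩
  · refine ⟨F x, fun z hz => ?_⟩
    have hconv : Convex ℝ (Set.Ioo z₀ z₁) := convex_Ioo _ _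
    have hopen : IsOpen (Set.Ioo z₀ z₁) := isOpen_Ioo
    have hdiff : DifferentiableOn ℝ F (Set.Ioo z₀ z₁) := fun y hy =>
      ((hderiv y hy).differentiableAt).differentiableWithinAt
    have hf' : ∀ y ∈ Set.Ioo z₀ z₁, fderivWithin ℝ F (Set.Ioo z₀ z₁) y = 0 := by
      intro y hy
      rw [fderivWithin_of_isOpen hopen hy, (hderiv y hy).hasFDerivAt.fderiv]
      ext
      simp
    exact hconv.is_const_of_fderivWithin_eq_zero hdiff hf' hz hx
end

section
/- For λ ∈ ℝ, the function q ↦ −(1/2)∫_{q₁}^{q} u du/√(u³ + λu² − u) + √q, defined for q ≥ q₁ with q₁ = (−λ + √(4+λ²))/2, converges to a finite limit as q → ∞. -/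
open MeasureTheory Set Filter intervalIntegral

set_option maxHeartbeats 1000000 in
theorem stmt_9 (lam : ℝ) :
    ∃ L : ℝ,
      Filter.Tendsto
        (fun q : ℝ =>
          -(1 / 2) * (∫ u in ((-lam + Real.sqrt (4 + lam ^ 2)) / 2)..q,
            u / Real.sqrt (u ^ 3 + lam * u ^ 2 - u)) + Real.sqrt q)
        Filter.atTop (nhds L) := by
  have hr2 : Real.sqrt (4 + lam ^ 2) ^ 2 = 4 + lam ^ 2 := Real.sq_sqrt (by positivity)
  set r := Real.sqrt (4 + lam ^ 2) with hrdef
  have hrpos : 0 < r := Real.sqrt_pos.mpr (by positivity)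
  set q1 := (-lam + r) / 2 with hq1def
  set q2 := (-lam - r) / 2 with hq2def
  have hq1pos : 0 < q1 := by
    have : lam < r := by nlinarith [sq_nonneg (r - lam), sq_nonneg (r + lam)]
    simp only [hq1def]; linarith
  have hq2neg : q2 < 0 := by
    have : -lam < r := by nlinarith [sq_nonneg (r - lam), sq_nonneg (r + lam)]
    simp only [hq2def]; linarith
  have hfact : ∀ u : ℝ, u ^ 3 + lam * u ^ 2 - u = u * (u - q1) * (u - q2) := by
    intro u; simp only [hq1def, hq2def]; linear_combination (u / 4) * hr2
  set f : ℝ → ℝ := fun u => u / Real.sqrt (u ^ 3 + lam * u ^ 2 - u) with hfdef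
  set b : ℝ := max (q1 + 1) (2 * (|lam| + 2)) with hbdef
  have hb1 : q1 + 1 ≤ b := le_max_left _ _
  have hb2 : 2 * (|lam| + 2) ≤ b := le_max_right _ _
  have hb4 : (4 : ℝ) ≤ b := le_trans (by nlinarith [abs_nonneg lam]) hb2
  have hbpos : 0 < b := by linarith
  have hq1b : q1 ≤ b := by linarith
  have hDpos : ∀ u : ℝ, q1 < u → 0 < u ^ 3 + lam * u ^ 2 - u := by
    intro u hu
    rw [hfact]
    have hu0 : 0 < u := lt_trans hq1pos hu
    exact mul_pos (mul_pos hu0 (by linarith)) (by linarith)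
  -- continuity of f on Ici (q1+1)
  have hfc : ContinuousOn f (Ici (q1 + 1)) := by
    apply ContinuousOn.div continuousOn_id
    · exact (Real.continuous_sqrt.comp (by continuity)).continuousOn
    · intro u hu
      exact ne_of_gt (Real.sqrt_pos.mpr (hDpos u (by simp at hu; linarith)))
  -- continuity of u ↦ 1/(2√u) on Ici (q1+1)
  have hgc : ContinuousOn (fun u : ℝ => 1 / (2 * Real.sqrt u)) (Ici (q1 + 1)) := by
    apply ContinuousOn.div continuousOn_const
    · exact (continuous_const.mul Real.continuous_sqrt).continuousOn
    · intro u hu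
      have : 0 < u := by simp at hu; linarith
      have := Real.sqrt_pos.mpr this
      positivity
  set h : ℝ → ℝ := fun u => 1 / (2 * Real.sqrt u) - 1 / 2 * f u with hhdef
  have hhc : ContinuousOn h (Ici (q1 + 1)) := hgc.sub (continuousOn_const.mul hfc)
  -- integrability of f near the singularity q1
  have hIf : IntervalIntegrable f volume q1 b := by
    rw [intervalIntegrable_iff_integrableOn_Ioc_of_le hq1b]
    have hc0 : 0 < q1 * (q1 - q2) := mul_pos hq1pos (by linarith)
    have hcs : 0 < Real.sqrt (q1 * (q1 - q2)) := Real.sqrt_pos.mpr hc0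
    have hg : IntegrableOn
        (fun u => (b / Real.sqrt (q1 * (q1 - q2))) * (u - q1) ^ (-(1/2) : ℝ))
        (Ioc q1 b) volume := by
      have h1 : IntervalIntegrable (fun u : ℝ => (u - q1) ^ (-(1/2) : ℝ)) volume q1 b := by
        have := (intervalIntegral.intervalIntegrable_rpow' (a := 0) (b := b - q1)
          (r := -(1/2)) (by norm_num)).comp_sub_right q1
        simpa using this
      rw [intervalIntegrable_iff_integrableOn_Ioc_of_le hq1b] at h1
      exact h1.const_mul _
    apply Integrable.mono' hg
    · have : Measurable f := by
        apply Measurable.div measurable_id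
        exact Real.continuous_sqrt.measurable.comp (by measurability)
      exact this.aestronglyMeasurable
    · rw [ae_restrict_iff' measurableSet_Ioc]
      filter_upwards with u hu
      obtain ⟨hu1, hu2⟩ := hu
      have hu0 : 0 < u := lt_trans hq1pos hu1
      have huq1 : 0 < u - q1 := by linarith
      have huq2 : 0 < u - q2 := by linarith
      have hA : Real.sqrt (u ^ 3 + lam * u ^ 2 - u)
          = Real.sqrt (u * (u - q2)) * Real.sqrt (u - q1) := by
        rw [hfact, show u * (u - q1) * (u - q2) = u * (u - q2) * (u - q1) by ring,
          Real.sqrt_mul (by positivity)]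
      have hApos : 0 < Real.sqrt (u * (u - q2)) := Real.sqrt_pos.mpr (by positivity)
      have hBpos : 0 < Real.sqrt (u - q1) := Real.sqrt_pos.mpr huq1
      have hA0 : Real.sqrt (q1 * (q1 - q2)) ≤ Real.sqrt (u * (u - q2)) :=
        Real.sqrt_le_sqrt (by nlinarith)
      have hfnn : 0 ≤ f u := div_nonneg hu0.le (Real.sqrt_nonneg _)
      rw [Real.norm_of_nonneg hfnn]
      have hstep : f u ≤ b / (Real.sqrt (q1 * (q1 - q2)) * Real.sqrt (u - q1)) := by
        simp only [hfdef]
        rw [hA]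
        apply div_le_div₀ hbpos.le (le_trans hu2 (le_refl b)) (by positivity)
        exact mul_le_mul_of_nonneg_right hA0 hBpos.le
      have hrpow : (u - q1) ^ (-(1/2) : ℝ) = (Real.sqrt (u - q1))⁻¹ := by
        rw [Real.rpow_neg huq1.le, Real.sqrt_eq_rpow]
      calc f u ≤ b / (Real.sqrt (q1 * (q1 - q2)) * Real.sqrt (u - q1)) := hstep
        _ = (b / Real.sqrt (q1 * (q1 - q2))) * (u - q1) ^ (-(1/2) : ℝ) := by
            rw [hrpow]; field_simp
  -- integrability of h on Ioi b
  have hIh : IntegrableOn h (Ioi b) volume := by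
    have hdom : IntegrableOn (fun u : ℝ => (|lam| + 1) * u ^ (-(3/2) : ℝ)) (Ioi b) volume :=
      (integrableOn_Ioi_rpow_of_lt (by norm_num) hbpos).const_mul _
    apply Integrable.mono' hdom
    · exact ((hhc.mono (fun x hx => le_trans hb1 (le_of_lt hx))).aestronglyMeasurable
        measurableSet_Ioi)
    · rw [ae_restrict_iff' measurableSet_Ioi]
      filter_upwards with u hu
      rw [mem_Ioi] at hu
      have hu4 : (4 : ℝ) ≤ u := by linarith
      have hu0 : 0 < u := by linarith
      have hulam : 2 * (|lam| + 2) ≤ u := by linarith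
      have hDq : u ^ 3 / 4 ≤ u ^ 3 + lam * u ^ 2 - u := by
        have hl : -(u / 2 - 2) ≤ lam := by
          have := neg_abs_le lam; linarith
        have hkey : 0 ≤ (lam + u / 2 - 2) * u ^ 2 :=
          mul_nonneg (by linarith) (sq_nonneg u)
        nlinarith [mul_pos hu0 (show (0:ℝ) < 2 * u - 1 by linarith)]
      have hD0 : 0 < u ^ 3 + lam * u ^ 2 - u := by nlinarith [pow_pos hu0 3]
      set s := Real.sqrt u with hsdef
      set d := Real.sqrt (u ^ 3 + lam * u ^ 2 - u) with hddef
      have hs2 : s ^ 2 = u := Real.sq_sqrt hu0.le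
      have hd2 : d ^ 2 = u ^ 3 + lam * u ^ 2 - u := Real.sq_sqrt hD0.le
      have hspos : 0 < s := Real.sqrt_pos.mpr hu0
      have hdpos : 0 < d := Real.sqrt_pos.mpr hD0
      have hd_lb : u * s / 2 ≤ d := by
        nlinarith [mul_pos hu0 hspos, hd2, hs2, hDq, hdpos]
      have hA : h u = (d - u * s) / (2 * (s * d)) := by
        simp only [hhdef, hfdef]
        rw [← hddef, ← hsdef]
        field_simp
      have hB : (d - u * s) * (d + u * s) = lam * u ^ 2 - u := by
        linear_combination hd2 - u ^ 2 * hs2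
      have hdus : 0 < d + u * s := by positivity
      have hC : d - u * s = (lam * u ^ 2 - u) / (d + u * s) := by
        rw [eq_div_iff (ne_of_gt hdus)]; exact hB
      have hid : h u = (lam * u ^ 2 - u) / ((d + u * s) * (2 * (s * d))) := by
        rw [hA, hC, div_div]
      have hnum : |lam * u ^ 2 - u| ≤ (|lam| + 1) * u ^ 2 := by
        have h1 : |lam * u ^ 2 - u| ≤ |lam * u ^ 2| + |u| := abs_sub _ _
        rw [abs_mul, abs_of_nonneg (sq_nonneg u), abs_of_pos hu0] at h1
        nlinarith
      have hden : u ^ 3 * s ≤ (d + u * s) * (2 * (s * d)) := by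
        nlinarith [mul_nonneg (sub_nonneg.mpr hd_lb) (mul_pos hspos hdpos).le,
          mul_nonneg (sub_nonneg.mpr hd_lb)
            (mul_pos hu0 (mul_pos hspos hspos)).le,
          hs2, hspos, hu0, mul_pos hspos hdpos]
      have hdenpos : 0 < (d + u * s) * (2 * (s * d)) := by positivity
      have hupow : u ^ (-(3/2) : ℝ) = (u * s)⁻¹ := by
        rw [Real.rpow_neg hu0.le, show ((3:ℝ)/2) = 1 + 1/2 by norm_num,
          Real.rpow_add hu0, Real.rpow_one, ← Real.sqrt_eq_rpow, ← hsdef]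
      have hnorm : ‖h u‖ = |lam * u ^ 2 - u| / ((d + u * s) * (2 * (s * d))) := by
        rw [Real.norm_eq_abs, hid, abs_div, abs_of_pos hdenpos]
      rw [hnorm, hupow]
      calc |lam * u ^ 2 - u| / ((d + u * s) * (2 * (s * d)))
          ≤ ((|lam| + 1) * u ^ 2) / (u ^ 3 * s) :=
            div_le_div₀ (by positivity) hnum (by positivity) hden
        _ = (|lam| + 1) * (u * s)⁻¹ := by
            rw [show u ^ 3 * s = u ^ 2 * (u * s) by ring]
            rw [mul_div_assoc, div_eq_mul_inv]
            congr 1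
            rw [mul_inv_eq_iff_eq_mul₀ (by positivity)]
            field_simp
  -- FTC for sqrt
  have hsqrtftc : ∀ q : ℝ, b ≤ q →
      (∫ u in b..q, 1 / (2 * Real.sqrt u)) = Real.sqrt q - Real.sqrt b := by
    intro q hq
    apply intervalIntegral.integral_eq_sub_of_hasDerivAt
    · intro x hx
      rw [uIcc_of_le hq] at hx
      exact Real.hasDerivAt_sqrt (by nlinarith [hx.1])
    · apply ContinuousOn.intervalIntegrable
      apply hgc.mono
      rw [uIcc_of_le hq]
      intro x hx
      simp only [mem_Ici]
      linarith [hx.1]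
  -- finish
  refine ⟨(-(1/2) * (∫ u in q1..b, f u) + Real.sqrt b) + ∫ u in Ioi b, h u, ?_⟩
  have htail : Tendsto (fun q : ℝ => ∫ u in b..q, h u) atTop (nhds (∫ u in Ioi b, h u)) :=
    intervalIntegral_tendsto_integral_Ioi b hIh tendsto_id
  have hmain : Tendsto
      (fun q : ℝ => (-(1/2) * (∫ u in q1..b, f u) + Real.sqrt b) + ∫ u in b..q, h u)
      atTop (nhds ((-(1/2) * (∫ u in q1..b, f u) + Real.sqrt b) + ∫ u in Ioi b, h u)) :=
    tendsto_const_nhds.add htail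
  apply hmain.congr'
  filter_upwards [eventually_ge_atTop b] with q hq
  have hsub : uIcc b q ⊆ Ici (q1 + 1) := by
    rw [uIcc_of_le hq]
    intro x hx
    simp only [mem_Ici]
    linarith [hx.1]
  have hIfq : IntervalIntegrable f volume b q :=
    (hfc.mono hsub).intervalIntegrable
  have hIgq : IntervalIntegrable (fun u : ℝ => 1 / (2 * Real.sqrt u)) volume b q :=
    (hgc.mono hsub).intervalIntegrable
  have hsplit : (∫ u in q1..q, f u) = (∫ u in q1..b, f u) + ∫ u in b..q, f u :=
    (intervalIntegral.integral_add_adjacent_intervals hIf hIfq).symm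
  have hhsplit : (∫ u in b..q, h u)
      = (∫ u in b..q, 1 / (2 * Real.sqrt u)) - 1 / 2 * ∫ u in b..q, f u := by
    simp only [hhdef]
    rw [intervalIntegral.integral_sub hIgq (hIfq.const_mul (1/2)),
      intervalIntegral.integral_const_mul]
  rw [hhsplit, hsqrtftc q hq, hsplit]
  ring
end

section
/- Suppose r > 0, κ > 0, and real numbers α, β, δ, together with r' ∈ ℝ, r'' ∈ ℝ, κ' ∈ ℝ, τ ∈ ℝ, α', β', δ' ∈ ℝ satisfy: (i) −(1/2)r³κ(β² − δ² + r²κ²) = 0; (ii) −r³βδκ = 0; (iii) (r³/2)(−6βκr' + r(5ακ² + κβ' − βκ')) = 0; (iv) (r³/2)(rκδ' − δ(6κr' + rκ')) = 0; and (v) −(r²/2)(3r³κ³ − 4αβr' + r(8α²κ + 3β²κ + 3κ(δ² + 2(r')²) − 2βα' + 2α(δτ + β')) + 2r²(r'κ' − κr'')) = 0. Then a contradiction follows; in particular no such configuration exists. -/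
private lemma deriv_eq_on {f g f' g' : ℝ → ℝ} {a b u : ℝ} (hu : u ∈ Set.Ioo a b)
    (h : ∀ x ∈ Set.Ioo a b, f x = g x)
    (hf : HasDerivAt f (f' u) u) (hg : HasDerivAt g (g' u) u) : f' u = g' u := by
  have hev : f =ᶠ[nhds u] g := Filter.eventuallyEq_of_mem (isOpen_Ioo.mem_nhds hu) h
  exact hf.unique (hg.congr_of_eventuallyEq hev)

private lemma deriv_eq_val {f g : ℝ → ℝ} {a b u c d : ℝ} (hu : u ∈ Set.Ioo a b)
    (h : ∀ x ∈ Set.Ioo a b, f x = g x)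
    (hf : HasDerivAt f c u) (hg : HasDerivAt g d u) : c = d := by
  have hev : f =ᶠ[nhds u] g := Filter.eventuallyEq_of_mem (isOpen_Ioo.mem_nhds hu) h
  exact hf.unique (hg.congr_of_eventuallyEq hev)

theorem stmt_12 (u₀ u₁ : ℝ) (hu : u₀ < u₁)
    (r κ α β δ τ r' r'' κ' α' β' δ' : ℝ → ℝ)
    (hr : ∀ u ∈ Set.Ioo u₀ u₁, 0 < r u)
    (hκ : ∀ u ∈ Set.Ioo u₀ u₁, 0 < κ u)
    (hdr : ∀ u ∈ Set.Ioo u₀ u₁, HasDerivAt r (r' u) u)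
    (hdr' : ∀ u ∈ Set.Ioo u₀ u₁, HasDerivAt r' (r'' u) u)
    (hdκ : ∀ u ∈ Set.Ioo u₀ u₁, HasDerivAt κ (κ' u) u)
    (hdα : ∀ u ∈ Set.Ioo u₀ u₁, HasDerivAt α (α' u) u)
    (hdβ : ∀ u ∈ Set.Ioo u₀ u₁, HasDerivAt β (β' u) u)
    (hdδ : ∀ u ∈ Set.Ioo u₀ u₁, HasDerivAt δ (δ' u) u)
    (h1 : ∀ u ∈ Set.Ioo u₀ u₁,
      -(1 / 2) * r u ^ 3 * κ u * (β u ^ 2 - δ u ^ 2 + r u ^ 2 * κ u ^ 2) = 0)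
    (h2 : ∀ u ∈ Set.Ioo u₀ u₁, -(r u ^ 3) * β u * δ u * κ u = 0)
    (h3 : ∀ u ∈ Set.Ioo u₀ u₁,
      (r u ^ 3 / 2) * (-(6 * β u * κ u * r' u)
        + r u * (5 * α u * κ u ^ 2 + κ u * β' u - β u * κ' u)) = 0)
    (h4 : ∀ u ∈ Set.Ioo u₀ u₁,
      (r u ^ 3 / 2) * (r u * κ u * δ' u - δ u * (6 * κ u * r' u + r u * κ' u)) = 0)
    (h5 : ∀ u ∈ Set.Ioo u₀ u₁,
      -(r u ^ 2 / 2) * (3 * r u ^ 3 * κ u ^ 3 - 4 * α u * β u * r' u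
        + r u * (8 * α u ^ 2 * κ u + 3 * β u ^ 2 * κ u
          + 3 * κ u * (δ u ^ 2 + 2 * (r' u) ^ 2)
          - 2 * β u * α' u + 2 * α u * (δ u * τ u + β' u))
        + 2 * r u ^ 2 * (r' u * κ' u - κ u * r'' u)) = 0) :
    False := by
  -- β ≡ 0 on the interval
  have hβ0 : ∀ u ∈ Set.Ioo u₀ u₁, β u = 0 := by
    intro u hu'
    have hru := hr u hu'; have hκu := hκ u hu'
    have e1 := h1 u hu'; have e2 := h2 u hu'
    have hne : r u ^ 3 * κ u ≠ 0 := by positivity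
    have hbd : β u * δ u = 0 := by
      have h' : (β u * δ u) * (r u ^ 3 * κ u) = 0 := by linear_combination -e2
      exact (mul_eq_zero.mp h').resolve_right hne
    have hsq : β u ^ 2 - δ u ^ 2 + r u ^ 2 * κ u ^ 2 = 0 := by
      have h' : (β u ^ 2 - δ u ^ 2 + r u ^ 2 * κ u ^ 2) * (r u ^ 3 * κ u) = 0 := by
        linear_combination (-2 : ℝ) * e1
      exact (mul_eq_zero.mp h').resolve_right hne
    have hδne : δ u ≠ 0 := by
      intro h0
      rw [h0] at hsq
      nlinarith [sq_nonneg (β u), mul_pos (pow_pos hru 2) (pow_pos hκu 2)]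
    exact (mul_eq_zero.mp hbd).resolve_right hδne
  -- δ² = r²κ² on the interval
  have hδ2 : ∀ u ∈ Set.Ioo u₀ u₁, δ u ^ 2 = r u ^ 2 * κ u ^ 2 := by
    intro u hu'
    have hru := hr u hu'; have hκu := hκ u hu'
    have e1 := h1 u hu'
    have hne : r u ^ 3 * κ u ≠ 0 := by positivity
    have hsq : β u ^ 2 - δ u ^ 2 + r u ^ 2 * κ u ^ 2 = 0 := by
      have h' : (β u ^ 2 - δ u ^ 2 + r u ^ 2 * κ u ^ 2) * (r u ^ 3 * κ u) = 0 := by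
        linear_combination (-2 : ℝ) * e1
      exact (mul_eq_zero.mp h').resolve_right hne
    have hb := hβ0 u hu'
    linear_combination -hsq + β u * hb
  -- β' ≡ 0
  have hβ' : ∀ u ∈ Set.Ioo u₀ u₁, β' u = 0 := fun u hu' =>
    deriv_eq_val (g := fun _ => 0) hu' hβ0 (hdβ u hu') (hasDerivAt_const u 0)
  -- α ≡ 0
  have hα0 : ∀ u ∈ Set.Ioo u₀ u₁, α u = 0 := by
    intro u hu'
    have hru := hr u hu'; have hκu := hκ u hu'
    have e3 := h3 u hu'
    rw [hβ0 u hu', hβ' u hu'] at e3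
    have hne : r u ^ 4 * κ u ^ 2 ≠ 0 := by positivity
    have h' : α u * (r u ^ 4 * κ u ^ 2) = 0 := by linear_combination (2 / 5 : ℝ) * e3
    exact (mul_eq_zero.mp h').resolve_right hne
  have hα' : ∀ u ∈ Set.Ioo u₀ u₁, α' u = 0 := fun u hu' =>
    deriv_eq_val (g := fun _ => 0) hu' hα0 (hdα u hu') (hasDerivAt_const u 0)
  -- r' ≡ 0
  have hr'0 : ∀ u ∈ Set.Ioo u₀ u₁, r' u = 0 := by
    intro u hu'
    have hru := hr u hu'; have hκu := hκ u hu'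
    have hdδ2 : HasDerivAt (fun x => δ x ^ 2) (2 * δ u * δ' u) u := by
      have := (hdδ u hu').fun_pow 2
      simpa [mul_comm, mul_assoc, mul_left_comm] using this
    have hdrκ : HasDerivAt (fun x => r x ^ 2 * κ x ^ 2)
        ((2 * r u * r' u) * κ u ^ 2 + r u ^ 2 * (2 * κ u * κ' u)) u := by
      have h1' := (hdr u hu').fun_pow 2
      have h2' := (hdκ u hu').fun_pow 2
      have := h1'.fun_mul h2'
      refine this.congr_deriv ?_
      norm_num
    have key : 2 * δ u * δ' u =
        (2 * r u * r' u) * κ u ^ 2 + r u ^ 2 * (2 * κ u * κ' u) :=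
      deriv_eq_val hu' hδ2 hdδ2 hdrκ
    have e4 := h4 u hu'
    have hd2 := hδ2 u hu'
    have hne3 : r u ^ 3 / 2 ≠ 0 := by positivity
    have e4' : r u * κ u * δ' u - δ u * (6 * κ u * r' u + r u * κ' u) = 0 :=
      (mul_eq_zero.mp e4).resolve_left hne3
    have hne : (5 : ℝ) * (r u ^ 2 * κ u ^ 3) ≠ 0 := by positivity
    have h' : r' u * (5 * (r u ^ 2 * κ u ^ 3)) = 0 := by
      linear_combination (-(δ u)) * e4' + (r u * κ u / 2) * key
        - (6 * κ u * r' u + r u * κ' u) * hd2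
    exact (mul_eq_zero.mp h').resolve_right hne
  have hr''0 : ∀ u ∈ Set.Ioo u₀ u₁, r'' u = 0 := fun u hu' =>
    deriv_eq_val (g := fun _ => 0) hu' hr'0 (hdr' u hu') (hasDerivAt_const u 0)
  -- contradiction from h5 at the midpoint
  set u := (u₀ + u₁) / 2 with hudef
  have hu' : u ∈ Set.Ioo u₀ u₁ := ⟨by linarith, by linarith⟩
  have hru := hr u hu'; have hκu := hκ u hu'
  have e5 := h5 u hu'
  rw [hβ0 u hu', hα0 u hu', hβ' u hu', hα' u hu', hr'0 u hu', hr''0 u hu',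
    hδ2 u hu'] at e5
  nlinarith [mul_pos (pow_pos hru 5) (pow_pos hκu 3)]
end

section
/- Let g be a holomorphic function on a domain of ℂ satisfying (g')² = g(√σ + g)(−1 + √σ g) for a constant σ > 0, with g nowhere zero. Then wherever g' ≠ 0, g'' = −√σ/2 + (σ − 1)g + (3√σ/2)g², and consequently the expression Im[(3/2)(g'/g)² − g''/g − (1/(1+|g|²))(g'/g)²] equals Im[((σ−1)(|g|²−1) − 4√σ Re(g)) / (2(1+|g|²))] = 0 at every such point. -/
theorem stmt_13 (U : Set ℂ) (hU : IsOpen U) (σ : ℝ) (hσ : 0 < σ)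
    (g g' g'' : ℂ → ℂ)
    (hg : ∀ z ∈ U, HasDerivAt g (g' z) z)
    (hg' : ∀ z ∈ U, HasDerivAt g' (g'' z) z)
    (hg0 : ∀ z ∈ U, g z ≠ 0)
    (hode : ∀ z ∈ U,
      (g' z) ^ 2 = g z * ((Real.sqrt σ : ℂ) + g z) * (-1 + (Real.sqrt σ : ℂ) * g z)) :
    ∀ z ∈ U, g' z ≠ 0 →
      (g'' z = -(Real.sqrt σ : ℂ) / 2 + ((σ : ℂ) - 1) * g z
          + (3 * (Real.sqrt σ : ℂ) / 2) * g z ^ 2) ∧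
      ((3 / 2) * (g' z / g z) ^ 2 - g'' z / g z
          - (1 / (1 + ((‖g z‖ : ℝ) : ℂ) ^ 2)) * (g' z / g z) ^ 2).im =
        ((((σ : ℂ) - 1) * (((‖g z‖ : ℝ) : ℂ) ^ 2 - 1)
            - 4 * (Real.sqrt σ : ℂ) * ((g z).re : ℂ)) /
          (2 * (1 + ((‖g z‖ : ℝ) : ℂ) ^ 2))).im ∧
      ((3 / 2) * (g' z / g z) ^ 2 - g'' z / g z
          - (1 / (1 + ((‖g z‖ : ℝ) : ℂ) ^ 2)) * (g' z / g z) ^ 2).im = 0 := by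
  intro z hz hgz'
  set s : ℂ := (Real.sqrt σ : ℂ) with hs
  have hs2 : s ^ 2 = (σ : ℂ) := by
    rw [hs]; norm_cast; exact Real.sq_sqrt hσ.le
  -- derivative of (g')^2
  have hd1 : HasDerivAt (fun w => g' w ^ 2) (2 * g' z * g'' z) z := by
    have := (hg' z hz).pow 2
    exact this.congr_deriv (by ring)
  -- derivative of RHS
  have hd2 : HasDerivAt (fun w => g w * (s + g w) * (-1 + s * g w))
      ((g' z * (s + g z) + g z * g' z) * (-1 + s * g z)
        + g z * (s + g z) * (s * g' z)) z := by
    exact (((hg z hz).mul ((hasDerivAt_const z s).add (hg z hz))).mul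
      ((hasDerivAt_const z (-1)).add ((hasDerivAt_const z s).mul (hg z hz)))).congr_deriv (by simp only [Pi.add_apply, Pi.mul_apply]; ring)
  have heq : (fun w => g' w ^ 2) =ᶠ[nhds z] (fun w => g w * (s + g w) * (-1 + s * g w)) := by
    filter_upwards [hU.mem_nhds hz] with w hw using hode w hw
  have hd1' : HasDerivAt (fun w => g' w ^ 2)
      ((g' z * (s + g z) + g z * g' z) * (-1 + s * g z)
        + g z * (s + g z) * (s * g' z)) z := hd2.congr_of_eventuallyEq heq
  have key : 2 * g' z * g'' z =
      (g' z * (s + g z) + g z * g' z) * (-1 + s * g z) + g z * (s + g z) * (s * g' z) :=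
    hd1.unique hd1'
  have hkey2 : g' z * (2 * g'' z) =
      g' z * (-s + 2 * s^2 * g z - 2 * g z + 3 * s * g z ^ 2) := by ring_nf; linear_combination key
  have hgpp : g'' z = -s / 2 + ((σ : ℂ) - 1) * g z + (3 * s / 2) * g z ^ 2 := by
    have h2 := mul_left_cancel₀ hgz' hkey2
    linear_combination h2 / 2 + g z * hs2
  have hw : g z ≠ 0 := hg0 z hz
  have hv : (starRingEnd ℂ) (g z) ≠ 0 := by simpa using hw
  have hc : ((‖g z‖ : ℝ) : ℂ) ^ 2 = g z * (starRingEnd ℂ) (g z) := by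
    rw [Complex.mul_conj]; norm_cast; exact Complex.sq_norm (g z)
  have h1c : (1 : ℂ) + g z * (starRingEnd ℂ) (g z) ≠ 0 := by
    rw [← hc]
    have : ((1 + ‖g z‖ ^ 2 : ℝ) : ℂ) ≠ 0 := by
      exact_mod_cast (by positivity : (1 + ‖g z‖ ^ 2 : ℝ) ≠ 0)
    push_cast at this
    simpa using this
  have hR : ((((σ : ℂ) - 1) * (((‖g z‖ : ℝ) : ℂ) ^ 2 - 1)
            - 4 * s * ((g z).re : ℂ)) /
          (2 * (1 + ((‖g z‖ : ℝ) : ℂ) ^ 2))).im = 0 := by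
    rw [show ((((σ : ℂ) - 1) * (((‖g z‖ : ℝ) : ℂ) ^ 2 - 1)
            - 4 * s * ((g z).re : ℂ)) /
          (2 * (1 + ((‖g z‖ : ℝ) : ℂ) ^ 2)))
        = (((σ - 1) * (‖g z‖ ^ 2 - 1) - 4 * Real.sqrt σ * (g z).re) /
            (2 * (1 + ‖g z‖ ^ 2)) : ℝ) from by push_cast [hs]; ring]
    exact Complex.ofReal_im _
  have hL : ((3 / 2) * (g' z / g z) ^ 2 - g'' z / g z
          - (1 / (1 + ((‖g z‖ : ℝ) : ℂ) ^ 2)) * (g' z / g z) ^ 2).im = 0 := by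
    rw [← Complex.conj_eq_iff_im, div_pow, hode z hz, hgpp, hc]
    simp only [map_sub, map_div₀, map_mul, map_add, map_pow, map_one, map_neg,
      map_ofNat, Complex.conj_conj, Complex.conj_ofReal, ← hs]
    rw [show (starRingEnd ℂ) s = s from by rw [hs]; exact Complex.conj_ofReal _]
    have h1c2 : (1 : ℂ) + (starRingEnd ℂ) (g z) * g z ≠ 0 := by
      rwa [mul_comm] at h1c
    field_simp [hw, hv, h1c, h1c2]
    ring
  exact ⟨hgpp, hL.trans hR.symm, hL⟩
end

section
/- Let g be a nonconstant holomorphic function on a connected domain U ⊆ ℂ, nowhere zero on U, and suppose there exist complex constants A, B, a₃ such that for all z ∈ U: conj(g(z)) · ((3/2)(g'(z))²/g(z) − g''(z) − B − a₃ g(z)) = g''(z)/g(z) − (1/2)(g'(z)/g(z))² + A g(z) − a₃. Then both sides vanish identically: (3/2)(g')²/g − g'' − B − a₃g ≡ 0 and g''/g − (1/2)(g'/g)² + Ag − a₃ ≡ 0, and consequently (g')² = g(−Ag² + 2a₃g + B) on U. -/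
open Complex

lemma conj_deriv_zero (g : ℂ → ℂ) (z : ℂ) (hg : DifferentiableAt ℂ g z)
    (hc : DifferentiableAt ℂ (fun w => (starRingEnd ℂ) (g w)) z) : deriv g z = 0 := by
  set c := deriv g z with hcdef
  have H1 : HasFDerivAt g
      (((ContinuousLinearMap.smulRight (1 : ℂ →L[ℂ] ℂ) c)).restrictScalars ℝ) z :=
    (hg.hasDerivAt.hasFDerivAt).restrictScalars ℝ
  have Hconj : HasFDerivAt (fun w : ℂ => (starRingEnd ℂ) w)
      (Complex.conjCLE.toContinuousLinearMap) (g z) :=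
    Complex.conjCLE.toContinuousLinearMap.hasFDerivAt
  have H2 : HasFDerivAt (fun w => (starRingEnd ℂ) (g w))
      (Complex.conjCLE.toContinuousLinearMap.comp
        ((ContinuousLinearMap.smulRight (1 : ℂ →L[ℂ] ℂ) c).restrictScalars ℝ)) z :=
    Hconj.comp z H1
  have H3 : HasFDerivAt (fun w => (starRingEnd ℂ) (g w))
      ((ContinuousLinearMap.smulRight (1 : ℂ →L[ℂ] ℂ)
        (deriv (fun w => (starRingEnd ℂ) (g w)) z)).restrictScalars ℝ) z :=
    (hc.hasDerivAt.hasFDerivAt).restrictScalars ℝ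
  have E := H2.unique H3
  have e1 : (starRingEnd ℂ) (c * 1) = (1 : ℂ) * deriv (fun w => (starRingEnd ℂ) (g w)) z := by
    have := congrArg (fun L : ℂ →L[ℝ] ℂ => L 1) E
    simpa [smul_eq_mul] using this
  have eI : -(I * (starRingEnd ℂ) c) = (I : ℂ) * deriv (fun w => (starRingEnd ℂ) (g w)) z := by
    have := congrArg (fun L : ℂ →L[ℝ] ℂ => L I) E
    simpa [smul_eq_mul] using this
  have hd : deriv (fun w => (starRingEnd ℂ) (g w)) z = (starRingEnd ℂ) c := by
    simpa using e1.symm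
  rw [hd] at eI
  have hc0 : (starRingEnd ℂ) c = 0 := by
    have h2 : (2 : ℂ) * I * (starRingEnd ℂ) c = 0 := by linear_combination -eI
    have hI : (2 : ℂ) * I ≠ 0 := by simp [Complex.I_ne_zero]
    exact (mul_eq_zero.mp h2).resolve_left hI
  simpa using congrArg (starRingEnd ℂ) hc0

theorem stmt_16 (U : Set ℂ) (hU : IsOpen U) (hUconn : IsConnected U)
    (g : ℂ → ℂ) (hg : DifferentiableOn ℂ g U)
    (hg0 : ∀ z ∈ U, g z ≠ 0)
    (hnonconst : ¬ ∃ c : ℂ, ∀ z ∈ U, g z = c)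
    (A B a₃ : ℂ)
    (heq : ∀ z ∈ U,
      (starRingEnd ℂ) (g z) *
          ((3 / 2) * (deriv g z) ^ 2 / g z - deriv (deriv g) z - B - a₃ * g z) =
        deriv (deriv g) z / g z - (1 / 2) * (deriv g z / g z) ^ 2 + A * g z - a₃) :
    ∀ z ∈ U,
      ((3 / 2) * (deriv g z) ^ 2 / g z - deriv (deriv g) z - B - a₃ * g z = 0) ∧
      (deriv (deriv g) z / g z - (1 / 2) * (deriv g z / g z) ^ 2 + A * g z - a₃ = 0) ∧
      (deriv g z) ^ 2 = g z * (-A * g z ^ 2 + 2 * a₃ * g z + B) := by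
  set P : ℂ → ℂ := fun z => (3 / 2) * (deriv g z) ^ 2 / g z - deriv (deriv g) z - B - a₃ * g z
    with hP
  set Q : ℂ → ℂ := fun z => deriv (deriv g) z / g z - (1 / 2) * (deriv g z / g z) ^ 2 + A * g z - a₃
    with hQ
  have han : AnalyticOnNhd ℂ g U := hg.analyticOnNhd hU
  have hg'an : AnalyticOnNhd ℂ (deriv g) U := han.deriv
  have hg''an : AnalyticOnNhd ℂ (deriv (deriv g)) U := hg'an.deriv
  have hg'd : DifferentiableOn ℂ (deriv g) U := hg'an.differentiableOn
  have hg''d : DifferentiableOn ℂ (deriv (deriv g)) U := hg''an.differentiableOn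
  have hPd : DifferentiableOn ℂ P U :=
    ((((differentiableOn_const _).mul (hg'd.pow 2)).div hg hg0).sub hg''d).sub
      (differentiableOn_const _) |>.sub ((differentiableOn_const _).mul hg)
  have hQd : DifferentiableOn ℂ Q U :=
    (((hg''d.div hg hg0).sub
      ((differentiableOn_const _).mul ((hg'd.div hg hg0).pow 2))).add
      ((differentiableOn_const _).mul hg)).sub (differentiableOn_const _)
  have hPzero : ∀ z ∈ U, P z = 0 := by
    by_contra hcon
    push_neg at hcon
    obtain ⟨z₀, hz₀U, hz₀⟩ := hcon
    set S : Set ℂ := {z ∈ U | P z ≠ 0} with hS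
    have hSsub : S ⊆ U := fun w hw => hw.1
    have hSopen : IsOpen S := by
      have : S = U ∩ P ⁻¹' {(0 : ℂ)}ᶜ := by
        ext w; simp [hS, Set.mem_setOf_eq]
      rw [this]
      exact hPd.continuousOn.isOpen_inter_preimage hU isOpen_compl_singleton
    have hz₀S : z₀ ∈ S := ⟨hz₀U, hz₀⟩
    have hconjd : DifferentiableOn ℂ (fun w => (starRingEnd ℂ) (g w)) S := by
      have hdiv : DifferentiableOn ℂ (fun w => Q w / P w) S :=
        (hQd.mono hSsub).div (hPd.mono hSsub) (fun w hw => hw.2)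
      refine hdiv.congr (fun w hw => ?_)
      exact (eq_div_iff hw.2).mpr (heq w hw.1)
    have hderiv0 : ∀ w ∈ S, deriv g w = 0 := by
      intro w hw
      exact conj_deriv_zero g w (hg.differentiableAt (hU.mem_nhds hw.1))
        (hconjd.differentiableAt (hSopen.mem_nhds hw))
    -- g is constant near z₀
    obtain ⟨r, hr, hball⟩ := Metric.isOpen_iff.mp hSopen z₀ hz₀S
    have hconst : ∀ y ∈ Metric.ball z₀ r, g y = g z₀ := by
      intro y hy
      refine (convex_ball z₀ r).is_const_of_fderivWithin_eq_zero
        (hg.mono (hball.trans hSsub)) (fun x hx => ?_) hy (Metric.mem_ball_self hr)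
      rw [fderivWithin_of_isOpen Metric.isOpen_ball hx]
      ext
      have : fderiv ℂ g x 1 = deriv g x := rfl
      simp [hderiv0 x (hball hx)]
    have hfg : g =ᶠ[nhds z₀] fun _ => g z₀ := by
      filter_upwards [Metric.ball_mem_nhds z₀ hr] with y hy using hconst y hy
    have := han.eqOn_of_preconnected_of_eventuallyEq analyticOnNhd_const
      hUconn.isPreconnected hz₀U hfg
    exact hnonconst ⟨g z₀, fun z hz => this hz⟩
  intro z hz
  have hP0 : P z = 0 := hPzero z hz
  have hQ0 : Q z = 0 := by
    have h := heq z hz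
    rw [show ((3:ℂ) / 2) * (deriv g z) ^ 2 / g z - deriv (deriv g) z - B - a₃ * g z = P z from rfl,
      hP0, mul_zero] at h
    exact h.symm
  refine ⟨hP0, hQ0, ?_⟩
  have hgz := hg0 z hz
  have e1 := hP0
  have e2 := hQ0
  rw [hP] at e1
  rw [hQ] at e2
  field_simp at e1 e2
  have key : (deriv g z) ^ 2 * (2 * g z) =
      g z * (-A * g z ^ 2 + 2 * a₃ * g z + B) * (2 * g z) := by
    linear_combination g z * e1 + g z * e2
  exact mul_right_cancel₀ (by simp [hgz] : (2 : ℂ) * g z ≠ 0) key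
end

section
/- Let g be holomorphic and nonvanishing on a domain U ⊆ ℂ. Writing the stereographically projected Gauss map as g = e^f for a holomorphic function f (locally), the Gaussian curvature K = −(4|g'/g| / ((|g| + |g|⁻¹)²))², computed with height differential φ₃ = dz, is bounded on U = ℂ if and only if |f'(z)|/cosh²(Re f(z)) is bounded on ℂ; in particular, if f is a nonlinear entire function then by Picard's theorem K is unbounded, and if f(z) = az + b is linear with a ≠ 0 then K is bounded. -/
/-- Gaussian curvature of the minimal surface with Weierstrass data `(g = e^f, φ₃ = dz)`:
`K = −(4|g'/g| / ((|g| + |g|⁻¹)²))²`. -/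
noncomputable def gaussCurv (f : ℂ → ℂ) (z : ℂ) : ℝ :=
  -((4 * ‖deriv (fun w => Complex.exp (f w)) z / Complex.exp (f z)‖) /
      (‖Complex.exp (f z)‖ + (‖Complex.exp (f z)‖)⁻¹) ^ 2) ^ 2

open Complex Metric Set

namespace GaussAux

variable {f : ℂ → ℂ}

lemma deriv_exp_comp (hf : Differentiable ℂ f) (z : ℂ) :
    deriv (fun w => Complex.exp (f w)) z = Complex.exp (f z) * deriv f z :=
  ((hf z).hasDerivAt.cexp).deriv

lemma gaussCurv_eq (hf : Differentiable ℂ f) (z : ℂ) :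
    gaussCurv f z = -(‖deriv f z‖ / Real.cosh ((f z).re) ^ 2) ^ 2 := by
  unfold gaussCurv
  have h1 : deriv (fun w => Complex.exp (f w)) z / Complex.exp (f z) = deriv f z := by
    rw [deriv_exp_comp hf]
    field_simp
  rw [h1, Complex.norm_exp, ← Real.exp_neg,
    show Real.exp (f z).re + Real.exp (-(f z).re) = 2 * Real.cosh (f z).re by
      rw [Real.cosh_eq]; ring]
  have hc := Real.cosh_pos (f z).re
  congr 1
  field_simp
  ring

lemma abs_gaussCurv (hf : Differentiable ℂ f) (z : ℂ) :
    |gaussCurv f z| = (‖deriv f z‖ / Real.cosh ((f z).re) ^ 2) ^ 2 := by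
  rw [gaussCurv_eq hf, abs_neg, _root_.abs_of_nonneg (sq_nonneg _)]

lemma hasDerivAt_line (hf : Differentiable ℂ f) (p q : ℂ) (s : ℝ) :
    HasDerivAt (fun t : ℝ => f (p + t * q)) (deriv f (p + s * q) * q) s := by
  have ha : HasDerivAt (fun w : ℂ => p + w * q) q (s : ℂ) := by
    simpa using ((hasDerivAt_id ((s : ℂ))).mul_const q).const_add p
  have h1 : HasDerivAt (fun w : ℂ => f (p + w * q)) (deriv f (p + (s : ℂ) * q) * q) (s : ℂ) := by
    simpa [Function.comp_def] using ((hf _).hasDerivAt.comp (s : ℂ) ha)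
  exact h1.comp_ofReal

lemma hasDerivAt_uline (hf : Differentiable ℂ f) (p q : ℂ) (s : ℝ) :
    HasDerivAt (fun t : ℝ => (f (p + t * q)).re) ((deriv f (p + s * q) * q).re) s := by
  simpa [Function.comp_def] using (Complex.reCLM.hasFDerivAt.comp_hasDerivAt s (hasDerivAt_line hf p q s))


/-- Lipschitz bound for `tanh (Re f)` from a zero of `Re f`. -/
lemma tanh_bound (hf : Differentiable ℂ f) {M : ℝ}
    (hbd : ∀ z, ‖deriv f z‖ ≤ M * Real.cosh ((f z).re) ^ 2)
    {ζ : ℂ} (hζ : (f ζ).re = 0) (z : ℂ) :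
    |Real.sinh (f z).re / Real.cosh (f z).re| ≤ M * ‖z - ζ‖ := by
  set q := z - ζ with hq
  set g : ℝ → ℝ := fun s => Real.sinh ((f (ζ + s * q)).re) / Real.cosh ((f (ζ + s * q)).re)
    with hgdef
  set g' : ℝ → ℝ := fun s =>
    (deriv f (ζ + s * q) * q).re / Real.cosh ((f (ζ + s * q)).re) ^ 2 with hg'def
  have hg : ∀ s : ℝ, HasDerivAt g (g' s) s := by
    intro s
    have hu := hasDerivAt_uline hf ζ q s
    have hT : HasDerivAt (fun x : ℝ => Real.sinh x / Real.cosh x)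
        (1 / Real.cosh ((f (ζ + s * q)).re) ^ 2) ((f (ζ + s * q)).re) := by
      set x := (f (ζ + s * q)).re
      have h0 := (Real.hasDerivAt_sinh x).div (Real.hasDerivAt_cosh x)
        (ne_of_gt (Real.cosh_pos x))
      refine h0.congr_deriv ?_
      have hc := Real.cosh_sq x
      have hcp := Real.cosh_pos x
      field_simp
      nlinarith [Real.cosh_sq x]
    have := hT.comp s hu
    simp only [hg'def, hgdef]
    refine this.congr_deriv ?_
    ring
  have hbound : ∀ s ∈ Set.Ico (0 : ℝ) 1, ‖g' s‖ ≤ M * ‖q‖ := by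
    intro s _
    have hcp := Real.cosh_pos ((f (ζ + s * q)).re)
    have h2 : (0:ℝ) < Real.cosh ((f (ζ + s * q)).re) ^ 2 := by positivity
    rw [Real.norm_eq_abs, hg'def]
    rw [abs_div, _root_.abs_of_pos h2, div_le_iff₀ h2]
    calc |(deriv f (ζ + s * q) * q).re| ≤ ‖deriv f (ζ + s * q) * q‖ :=
          Complex.abs_re_le_norm _
      _ = ‖deriv f (ζ + s * q)‖ * ‖q‖ := norm_mul _ _
      _ ≤ M * Real.cosh ((f (ζ + s * q)).re) ^ 2 * ‖q‖ := by
          have := hbd (ζ + s * q)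
          have hq0 : (0:ℝ) ≤ ‖q‖ := norm_nonneg _
          nlinarith
      _ = M * ‖q‖ * Real.cosh ((f (ζ + s * q)).re) ^ 2 := by ring
  have key := norm_image_sub_le_of_norm_deriv_le_segment'
    (f := g) (f' := g') (fun s _ => (hg s).hasDerivWithinAt) hbound 1 (right_mem_Icc.2 zero_le_one)
  have hg0 : g 0 = 0 := by
    simp [hgdef, hζ]
  have hg1 : g 1 = Real.sinh (f z).re / Real.cosh (f z).re := by
    have h1 : ζ + ((1:ℝ):ℂ) * q = z := by rw [hq]; push_cast; ring
    rw [hgdef]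
    simp only []
    rw [h1]
  rw [hg0, hg1, sub_zero, Real.norm_eq_abs] at key
  simpa using key

/-- Near a zero of `Re f`, `cosh (Re f)²` and `|Re f|` are small. -/
lemma near_zero (hf : Differentiable ℂ f) {M : ℝ} (hM : 0 < M)
    (hbd : ∀ z, ‖deriv f z‖ ≤ M * Real.cosh ((f z).re) ^ 2)
    {ζ z : ℂ} (hζ : (f ζ).re = 0) (hd : ‖z - ζ‖ ≤ 1 / (2 * M)) :
    Real.cosh ((f z).re) ^ 2 ≤ 4 / 3 ∧ |(f z).re| ≤ 1 := by
  have h := tanh_bound hf hbd hζ z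
  have h12 : |Real.sinh (f z).re / Real.cosh (f z).re| ≤ 1 / 2 := by
    calc |Real.sinh (f z).re / Real.cosh (f z).re| ≤ M * ‖z - ζ‖ := h
      _ ≤ M * (1 / (2 * M)) := by nlinarith [norm_nonneg (z - ζ)]
      _ = 1 / 2 := by field_simp
  set x := (f z).re
  have hcp := Real.cosh_pos x
  have hsinh : |Real.sinh x| ≤ Real.cosh x / 2 := by
    rw [abs_div, _root_.abs_of_pos hcp] at h12
    rw [div_le_iff₀ hcp] at h12
    linarith
  have hsq := Real.cosh_sq x
  have hcosh2 : Real.cosh x ^ 2 ≤ 4 / 3 := by nlinarith [abs_nonneg (Real.sinh x), _root_.sq_abs (Real.sinh x)]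
  refine ⟨hcosh2, ?_⟩
  -- |sinh x| ≤ cosh x / 2 ≤ 0.6 < sinh 1
  have hcoshle : Real.cosh x ≤ 1.2 := by nlinarith
  have hsinh1 : (0.6:ℝ) < Real.sinh 1 := by
    rw [Real.sinh_eq]
    have he : (2.7182818283:ℝ) < Real.exp 1 := Real.exp_one_gt_d9
    have hepos : (0:ℝ) < Real.exp 1 := by positivity
    have hinv : Real.exp (-1) < 0.37 := by
      rw [Real.exp_neg]
      rw [inv_lt_iff_one_lt_mul₀ hepos]
      nlinarith
    nlinarith
  have habs : Real.sinh |x| ≤ 0.6 := by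
    rw [← Real.abs_sinh]
    linarith
  by_contra hgt
  push_neg at hgt
  have : Real.sinh 1 < Real.sinh |x| := Real.sinh_lt_sinh.2 hgt
  linarith

/-- Half-plane Schwarz–Pick estimate: if `Re f > 0` on `ball z₀ R` then
`|f'(z₀)| ≤ 2 Re f(z₀) / R`. -/
lemma schwarz_half (hf : Differentiable ℂ f) {z₀ : ℂ} {R : ℝ} (hR : 0 < R)
    (hpos : ∀ w ∈ ball z₀ R, 0 < (f w).re) :
    ‖deriv f z₀‖ ≤ 2 * (f z₀).re / R := by
  set w₀ := f z₀ with hw₀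
  have hu₀ : 0 < w₀.re := hpos z₀ (mem_ball_self hR)
  have hden : ∀ w ∈ ball z₀ R, f w + (starRingEnd ℂ) w₀ ≠ 0 := by
    intro w hw h0
    have h1 : (f w + (starRingEnd ℂ) w₀).re = (f w).re + w₀.re := by
      simp [Complex.add_re, Complex.conj_re]
    rw [h0] at h1
    simp only [Complex.zero_re] at h1
    nlinarith [hpos w hw]
  set F : ℂ → ℂ := fun z => (f z - w₀) / (f z + (starRingEnd ℂ) w₀) with hFdef
  have hdF : DifferentiableOn ℂ F (ball z₀ R) :=
    DifferentiableOn.div ((hf.differentiableOn).sub_const w₀)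
      ((hf.differentiableOn).add_const _) hden
  have hF0 : F z₀ = 0 := by simp [hFdef, ← hw₀]
  have hmaps : MapsTo F (ball z₀ R) (ball (F z₀) 1) := by
    intro w hw
    rw [hF0, mem_ball, Complex.dist_eq, sub_zero]
    have h1 : 0 < (f w).re := hpos w hw
    have hd0 : f w + (starRingEnd ℂ) w₀ ≠ 0 := hden w hw
    rw [hFdef]
    simp only []
    rw [norm_div, div_lt_one (norm_pos_iff.mpr hd0)]
    have hsq : ‖f w - w₀‖ ^ 2 < ‖f w + (starRingEnd ℂ) w₀‖ ^ 2 := by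
      rw [Complex.sq_norm, Complex.sq_norm, Complex.normSq_apply, Complex.normSq_apply]
      simp only [Complex.sub_re, Complex.sub_im, Complex.add_re, Complex.add_im,
        Complex.conj_re, Complex.conj_im]
      nlinarith [h1, hu₀]
    exact lt_of_pow_lt_pow_left₀ 2 (norm_nonneg _) hsq
  have hS := Complex.norm_deriv_le_div_of_mapsTo_ball hdF (hmaps.mono_right ball_subset_closedBall) hR
  have hden0 : f z₀ + (starRingEnd ℂ) w₀ ≠ 0 := hden z₀ (mem_ball_self hR)
  have hDsum : f z₀ + (starRingEnd ℂ) w₀ = ((2 * w₀.re : ℝ) : ℂ) := by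
    rw [← hw₀, Complex.add_conj]
  have hDF : deriv F z₀ = deriv f z₀ / ((2 * w₀.re : ℝ) : ℂ) := by
    have h1 : HasDerivAt (fun z => f z - w₀) (deriv f z₀) z₀ := (hf z₀).hasDerivAt.sub_const _
    have h2 : HasDerivAt (fun z => f z + (starRingEnd ℂ) w₀) (deriv f z₀) z₀ :=
      (hf z₀).hasDerivAt.add_const _
    have h3 := (h1.div h2 hden0).deriv
    rw [hFdef]
    rw [show (fun z => (f z - w₀) / (f z + (starRingEnd ℂ) w₀)) =
        ((fun z => f z - w₀) / fun z => f z + (starRingEnd ℂ) w₀) from rfl, h3, hDsum]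
    have hz0 : f z₀ - w₀ = 0 := by rw [hw₀]; exact sub_self _
    rw [hz0, zero_mul, sub_zero]
    have hne2 : ((w₀.re : ℝ) : ℂ) ≠ 0 := Complex.ofReal_ne_zero.mpr (ne_of_gt hu₀)
    push_cast
    field_simp
  rw [hDF] at hS
  rw [norm_div, Complex.norm_real, Real.norm_eq_abs, _root_.abs_of_pos (by linarith : (0:ℝ) < 2 * w₀.re)] at hS
  rw [div_le_div_iff₀ (by linarith : (0:ℝ) < 2 * w₀.re) hR] at hS
  rw [le_div_iff₀ hR]
  linarith

/-- If `Re f` has no zero on a ball and is positive at the centre, it is positive on the ball. -/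
lemma pos_on_ball (hf : Differentiable ℂ f) {z : ℂ} {r : ℝ} (hz : 0 < (f z).re)
    (hno : ∀ w ∈ ball z r, (f w).re ≠ 0) : ∀ w ∈ ball z r, 0 < (f w).re := by
  intro w hw
  rcases lt_trichotomy ((f w).re) 0 with hlt | heq | hgt
  · exfalso
    set g : ℝ → ℝ := fun s => (f (z + s * (w - z))).re with hgdef
    have hcont : ContinuousOn g (Icc (0:ℝ) 1) := by
      apply Continuous.continuousOn
      apply Complex.continuous_re.comp
      apply hf.continuous.comp
      continuity
    have hg1 : g 1 = (f w).re := by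
      have : z + ((1:ℝ):ℂ) * (w - z) = w := by push_cast; ring
      rw [hgdef]; simp only []; rw [this]
    have hg0 : g 0 = (f z).re := by
      rw [hgdef]; simp only []; push_cast; rw [show z + 0 * (w - z) = z by ring]
    have hsub := intermediate_value_Icc' (zero_le_one) hcont
    have h0mem : (0:ℝ) ∈ Icc (g 1) (g 0) := by
      rw [hg0, hg1]; constructor <;> linarith
    obtain ⟨s, hs, hs0⟩ := hsub h0mem
    have hmem : z + (s : ℂ) * (w - z) ∈ ball z r := by
      rw [mem_ball, Complex.dist_eq]
      have h4 : z + (s : ℂ) * (w - z) - z = (s:ℂ) * (w - z) := by ring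
      rw [h4, norm_mul, Complex.norm_real, Real.norm_eq_abs]
      have hs1 : |s| ≤ 1 := by rw [abs_le]; exact ⟨by linarith [hs.1], hs.2⟩
      have hwz : ‖w - z‖ < r := by
        rw [mem_ball, Complex.dist_eq] at hw; exact hw
      have hr : 0 < r := lt_of_le_of_lt (norm_nonneg _) hwz
      nlinarith [norm_nonneg (w - z)]
    exact hno _ hmem hs0
  · exact absurd heq (hno w hw)
  · exact hgt

set_option maxHeartbeats 1000000 in
/-- Key growth estimate at points where `Re f > 0`. -/
lemma growth_pos (hf : Differentiable ℂ f) {M : ℝ} (hM : 0 < M)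
    (hbd : ∀ z, ‖deriv f z‖ ≤ M * Real.cosh ((f z).re) ^ 2)
    (hZne : {w : ℂ | (f w).re = 0}.Nonempty) {z : ℂ} (hz : 0 < (f z).re) :
    ‖deriv f z‖ ≤ 32 * M + 8 * M ^ 2 * Metric.infDist z {w : ℂ | (f w).re = 0} := by
  set Z := {w : ℂ | (f w).re = 0} with hZdef
  have hcl : IsClosed Z := isClosed_eq (Complex.continuous_re.comp hf.continuous) continuous_const
  obtain ⟨ζ, hζZ, hζd⟩ := hcl.exists_infDist_eq_dist hZne z
  set d := Metric.infDist z Z with hddef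
  have hζ0 : (f ζ).re = 0 := hζZ
  have hd0 : 0 ≤ d := Metric.infDist_nonneg
  have hdd : ‖z - ζ‖ = d := by rw [hζd, Complex.dist_eq]
  by_cases hsmall : d ≤ 1 / (2 * M)
  · have hn := near_zero hf hM hbd hζ0 (by rw [hdd]; exact hsmall)
    calc ‖deriv f z‖ ≤ M * Real.cosh ((f z).re) ^ 2 := hbd z
      _ ≤ M * (4 / 3) := by nlinarith [hn.1]
      _ ≤ 32 * M + 8 * M ^ 2 * d := by nlinarith
  · push_neg at hsmall
    have hdpos : 0 < d := lt_trans (by positivity) hsmall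
    have hno : ∀ w ∈ ball z d, (f w).re ≠ 0 := by
      intro w hw h0
      have h1 : d ≤ dist z w := Metric.infDist_le_dist_of_mem h0
      rw [mem_ball, dist_comm] at hw
      linarith
    have hpos := pos_on_ball hf hz hno
    have hSz := schwarz_half hf hdpos hpos
    set ρ : ℝ := 1 / (2 * M) with hρdef
    have hρpos : 0 < ρ := by positivity
    have hρd : ρ < d := hsmall
    set s₁ : ℝ := 1 - ρ / d with hs₁def
    have hs₁0 : 0 < s₁ := by
      rw [hs₁def]; have : ρ / d < 1 := (div_lt_one hdpos).2 hρd; linarith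
    have hs₁1 : s₁ < 1 := by
      rw [hs₁def]; have : 0 < ρ / d := by positivity
      linarith
    set γ : ℝ → ℂ := fun s => z + s * (ζ - z) with hγdef
    have habsζz : ‖ζ - z‖ = d := by
      rw [show ζ - z = -(z - ζ) by ring, norm_neg, hdd]
    have hγdist : ∀ s : ℝ, 0 ≤ s → dist (γ s) z = s * d := by
      intro s h0s
      rw [hγdef]; simp only []
      rw [Complex.dist_eq, show z + (s:ℂ) * (ζ - z) - z = (s:ℂ) * (ζ - z) by ring,
        norm_mul, Complex.norm_real, Real.norm_eq_abs, habsζz, _root_.abs_of_nonneg h0s]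
    have hγball : ∀ s : ℝ, 0 ≤ s → s < 1 → γ s ∈ ball z d := by
      intro s h0s h1s
      rw [mem_ball, hγdist s h0s]
      nlinarith
    have hγpos : ∀ s : ℝ, 0 ≤ s → s < 1 → 0 < (f (γ s)).re := fun s h0 h1 =>
      hpos _ (hγball s h0 h1)
    have hSγ : ∀ s : ℝ, 0 ≤ s → s < 1 →
        ‖deriv f (γ s)‖ ≤ 2 * (f (γ s)).re / ((1 - s) * d) := by
      intro s h0s h1s
      have hrpos : 0 < (1 - s) * d := by nlinarith
      apply schwarz_half hf hrpos
      intro w hw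
      apply hpos
      rw [mem_ball] at hw ⊢
      calc dist w z ≤ dist w (γ s) + dist (γ s) z := dist_triangle _ _ _
        _ < (1 - s) * d + s * d := by
            rw [hγdist s h0s] at *
            linarith [hw]
        _ = d := by ring
    set G : ℝ → ℝ := fun s => Real.log ((f (γ s)).re) - 2 * Real.log (1 - s) with hGdef
    have hGd : ∀ s : ℝ, 0 ≤ s → s < 1 → HasDerivAt G
        ((deriv f (γ s) * (ζ - z)).re / (f (γ s)).re + 2 / (1 - s)) s := by
      intro s h0s h1s
      have h1 : HasDerivAt (fun t : ℝ => Real.log ((f (γ t)).re))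
          ((deriv f (γ s) * (ζ - z)).re / (f (γ s)).re) s := by
        have hu := hasDerivAt_uline hf z (ζ - z) s
        exact hu.log (ne_of_gt (hγpos s h0s h1s))
      have h2 : HasDerivAt (fun t : ℝ => Real.log (1 - t)) (-1 / (1 - s)) s := by
        have hid : HasDerivAt (fun t : ℝ => 1 - t) (-1) s := by
          simpa using (hasDerivAt_id s).const_sub 1
        have h1ms : (1:ℝ) - s ≠ 0 := by intro h0; rw [sub_eq_zero] at h0; exact absurd h0.symm (ne_of_lt h1s)
        simpa using hid.log h1ms
      have h3 := h1.sub (h2.const_mul (2:ℝ))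
      refine h3.congr_deriv ?_
      have h1ms : (0:ℝ) < 1 - s := by linarith
      field_simp
      ring
    have hGmono : G 0 ≤ G s₁ := by
      have hmono := monotoneOn_of_deriv_nonneg (convex_Icc (0:ℝ) s₁)
        (fun s hs => ((hGd s hs.1 (lt_of_le_of_lt hs.2 hs₁1)).continuousAt).continuousWithinAt)
        (fun s hs => by
          rw [interior_Icc] at hs
          exact ((hGd s (le_of_lt hs.1) (lt_trans hs.2 hs₁1)).differentiableAt).differentiableWithinAt)
        (fun s hs => by
          rw [interior_Icc] at hs
          have h0s : 0 ≤ s := le_of_lt hs.1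
          have h1s : s < 1 := lt_trans hs.2 hs₁1
          rw [(hGd s h0s h1s).deriv]
          have hupos := hγpos s h0s h1s
          have h1ms : (0:ℝ) < 1 - s := by linarith
          have habs : |(deriv f (γ s) * (ζ - z)).re| ≤ 2 * (f (γ s)).re / (1 - s) := by
            calc |(deriv f (γ s) * (ζ - z)).re| ≤ ‖deriv f (γ s) * (ζ - z)‖ :=
                  Complex.abs_re_le_norm _
              _ = ‖deriv f (γ s)‖ * d := by rw [norm_mul, habsζz]
              _ ≤ (2 * (f (γ s)).re / ((1 - s) * d)) * d := by
                  have := hSγ s h0s h1s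
                  nlinarith
              _ = 2 * (f (γ s)).re / (1 - s) := by field_simp
          have hlow : -(2 * (f (γ s)).re / (1 - s)) ≤ (deriv f (γ s) * (ζ - z)).re := by
            linarith [(abs_le.1 habs).1]
          have h5 : -(2 / (1 - s)) ≤ (deriv f (γ s) * (ζ - z)).re / (f (γ s)).re := by
            rw [le_div_iff₀ hupos]
            calc -(2 / (1 - s)) * (f (γ s)).re = -(2 * (f (γ s)).re / (1 - s)) := by
                  field_simp
              _ ≤ _ := hlow
          linarith [h5])
      exact hmono (left_mem_Icc.2 (le_of_lt hs₁0)) (right_mem_Icc.2 (le_of_lt hs₁0)) (le_of_lt hs₁0)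
    -- evaluate the monotonicity
    have h1s₁ : 1 - s₁ = ρ / d := by rw [hs₁def]; ring
    have hγs₁near : ‖γ s₁ - ζ‖ ≤ 1 / (2 * M) := by
      rw [hγdef]; simp only []
      rw [show z + (s₁:ℂ) * (ζ - z) - ζ = ((1:ℂ) - (s₁:ℂ)) * (z - ζ) by ring]
      rw [norm_mul, show (1:ℂ) - (s₁:ℂ) = ((1 - s₁ : ℝ) : ℂ) by push_cast; ring,
        Complex.norm_real, Real.norm_eq_abs, hdd, _root_.abs_of_nonneg (by nlinarith : (0:ℝ) ≤ 1 - s₁), h1s₁]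
      rw [hρdef]
      rw [div_mul_eq_mul_div, mul_div_assoc, div_self (ne_of_gt hdpos), mul_one]
    have hu1 := (near_zero hf hM hbd hζ0 hγs₁near).2
    have hupos₁ : 0 < (f (γ s₁)).re := hγpos s₁ (le_of_lt hs₁0) hs₁1
    have hG0 : G 0 = Real.log ((f z).re) := by
      rw [hGdef]; simp only []
      rw [show γ 0 = z by rw [hγdef]; simp]
      simp
    have hGs₁ : G s₁ = Real.log ((f (γ s₁)).re) - 2 * Real.log (ρ / d) := by
      rw [hGdef]; simp only []; rw [h1s₁]
    have hlog1 : Real.log ((f (γ s₁)).re) ≤ 0 :=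
      Real.log_nonpos (le_of_lt hupos₁) (le_trans (le_abs_self _) hu1)
    have hu : (f z).re ≤ 4 * M ^ 2 * d ^ 2 := by
      have hfinal : Real.log ((f z).re) ≤ Real.log ((2 * M * d) ^ 2) := by
        rw [hG0, hGs₁] at hGmono
        have hlogρd : Real.log (ρ / d) = - Real.log (d / ρ) := by
          rw [← Real.log_inv]; congr 1; rw [inv_div]
        have hdρ : d / ρ = 2 * M * d := by rw [hρdef]; field_simp
        rw [Real.log_pow]
        push_cast
        rw [hlogρd, hdρ] at hGmono
        linarith
      have h6 := (Real.log_le_log_iff hz (by positivity)).1 hfinal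
      nlinarith [h6]
    calc ‖deriv f z‖ ≤ 2 * (f z).re / d := hSz
      _ ≤ 2 * (4 * M ^ 2 * d ^ 2) / d := by
          rw [div_le_div_iff_of_pos_right hdpos]; linarith [hu]
      _ = 8 * M ^ 2 * d := by field_simp; ring
      _ ≤ 32 * M + 8 * M ^ 2 * d := by nlinarith

lemma growth (hf : Differentiable ℂ f) {M : ℝ} (hM : 0 < M)
    (hbd : ∀ z, ‖deriv f z‖ ≤ M * Real.cosh ((f z).re) ^ 2)
    (hZne : {w : ℂ | (f w).re = 0}.Nonempty) (z : ℂ) :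
    ‖deriv f z‖ ≤ 32 * M + 8 * M ^ 2 * Metric.infDist z {w : ℂ | (f w).re = 0} := by
  rcases lt_trichotomy ((f z).re) 0 with hlt | heq | hgt
  · have hg : Differentiable ℂ (fun w => -(f w)) := hf.neg
    have hgd : ∀ w, deriv (fun w => -(f w)) w = -(deriv f w) := fun w =>
      ((hf w).hasDerivAt.neg).deriv
    have hgbd : ∀ w, ‖deriv (fun w => -(f w)) w‖ ≤
        M * Real.cosh (((fun w => -(f w)) w).re) ^ 2 := by
      intro w; rw [hgd w, norm_neg]
      simpa only [Complex.neg_re, Real.cosh_neg] using hbd w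
    have hZeq : {w : ℂ | ((fun w => -(f w)) w).re = 0} = {w : ℂ | (f w).re = 0} := by
      ext w; simp [neg_eq_zero]
    have hgz : 0 < ((fun w => -(f w)) z).re := by simp only [Complex.neg_re]; linarith
    have h := growth_pos hg hM hgbd (by rw [hZeq]; exact hZne) hgz
    rw [hgd z, norm_neg, hZeq] at h
    exact h
  · have h := hbd z
    rw [heq] at h
    simp only [Real.cosh_zero, one_pow, mul_one] at h
    have h2 : (0:ℝ) ≤ Metric.infDist z {w : ℂ | (f w).re = 0} := Metric.infDist_nonneg
    nlinarith
  · exact growth_pos hf hM hbd hZne hgt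

lemma growth' (hf : Differentiable ℂ f) {M : ℝ} (hM : 0 < M)
    (hbd : ∀ z, ‖deriv f z‖ ≤ M * Real.cosh ((f z).re) ^ 2)
    {zs : ℂ} (hzs : (f zs).re = 0) (z : ℂ) :
    ‖deriv f z‖ ≤ (32 * M + 8 * M ^ 2 * ‖zs‖) + 8 * M ^ 2 * ‖z‖ := by
  have h := growth hf hM hbd ⟨zs, hzs⟩ z
  have hle : Metric.infDist z {w : ℂ | (f w).re = 0} ≤ dist z zs :=
    Metric.infDist_le_dist_of_mem hzs
  have htri : dist z zs ≤ ‖z‖ + ‖zs‖ := by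
    rw [Complex.dist_eq, sub_eq_add_neg]
    calc ‖z + -zs‖ ≤ ‖z‖ + ‖-zs‖ := norm_add_le _ _
      _ = ‖z‖ + ‖zs‖ := by rw [norm_neg]
  nlinarith [sq_nonneg M, Metric.infDist_nonneg (x := z) (s := {w : ℂ | (f w).re = 0})]

lemma deriv_bound_of_linear_growth {g : ℂ → ℂ} (hg : Differentiable ℂ g) {A B : ℝ} (hB : 0 < B)
    (h : ∀ z, ‖g z‖ ≤ A + B * ‖z‖) (z : ℂ) :
    ‖deriv g z‖ ≤ 2 * B := by
  have hA : 0 ≤ A := by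
    have h0 := h 0
    rw [norm_zero, mul_zero, add_zero] at h0
    exact le_trans (norm_nonneg _) h0
  set R := (2 * A + 2 * B * ‖z‖ + 1) / B with hR
  have hRpos : 0 < R := by positivity
  have hBR : B * R = 2 * A + 2 * B * ‖z‖ + 1 := by rw [hR]; field_simp
  have hmaps : MapsTo g (ball z R) (ball (g z) (2 * B * R)) := by
    intro w hw
    rw [mem_ball, Complex.dist_eq]
    have hwz : ‖w - z‖ < R := by rw [mem_ball, Complex.dist_eq] at hw; exact hw
    have hwa : ‖w‖ ≤ ‖z‖ + R := by
      calc ‖w‖ = ‖z + (w - z)‖ := by congr 1; ring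
        _ ≤ ‖z‖ + ‖w - z‖ := norm_add_le _ _
        _ ≤ ‖z‖ + R := by linarith
    calc ‖g w - g z‖ ≤ ‖g w‖ + ‖g z‖ := by
          rw [sub_eq_add_neg]
          calc ‖g w + -(g z)‖ ≤ ‖g w‖ + ‖-(g z)‖ :=
                norm_add_le _ _
            _ = ‖g w‖ + ‖g z‖ := by rw [norm_neg]
      _ ≤ (A + B * (‖z‖ + R)) + (A + B * ‖z‖) := by
          nlinarith [h w, h z]
      _ < 2 * B * R := by nlinarith
  have hS := Complex.norm_deriv_le_div_of_mapsTo_ball (hg.differentiableOn) (hmaps.mono_right ball_subset_closedBall) hRpos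
  calc ‖deriv g z‖ ≤ 2 * B * R / R := hS
    _ = 2 * B := by field_simp

set_option maxHeartbeats 1000000 in
/-- Main rigidity lemma: an entire function with `|f'| ≤ M cosh²(Re f)` is affine. -/
lemma affine_of_bound (hf : Differentiable ℂ f) {M : ℝ} (hM : 0 < M)
    (hbd : ∀ z, ‖deriv f z‖ ≤ M * Real.cosh ((f z).re) ^ 2) :
    ∃ a b : ℂ, ∀ z, f z = a * z + b := by
  by_cases hZ : {w : ℂ | (f w).re = 0}.Nonempty
  · obtain ⟨zs, hzs⟩ := hZ
    have hzs' : (f zs).re = 0 := hzs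
    have hgrow := growth' hf hM hbd hzs'
    have han : AnalyticOnNhd ℂ f univ := analyticOnNhd_univ_iff_differentiable.mpr hf
    have hd1 : Differentiable ℂ (deriv f) := analyticOnNhd_univ_iff_differentiable.mp han.deriv
    have hd2 : Differentiable ℂ (deriv (deriv f)) :=
      analyticOnNhd_univ_iff_differentiable.mp han.deriv.deriv
    have hBpos : (0:ℝ) < 8 * M ^ 2 := by positivity
    have hdd := fun w => deriv_bound_of_linear_growth hd1 hBpos hgrow w
    have hbdd : Bornology.IsBounded (Set.range (deriv (deriv f))) := by
      rw [isBounded_iff_forall_norm_le]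
      refine ⟨2 * (8 * M ^ 2), ?_⟩
      rintro x ⟨w, rfl⟩
      exact hdd w
    have hcc : ∀ w, deriv (deriv f) w = deriv (deriv f) 0 := fun w =>
      hd2.apply_eq_apply_of_bounded hbdd w 0
    set c := deriv (deriv f) 0 with hc
    set e := deriv f 0 with he
    have h5 : ∀ w, deriv f w = c * w + e := by
      intro w
      have hF : Differentiable ℂ (fun w => deriv f w - c * w) :=
        hd1.sub (differentiable_id.const_mul c)
      have hF0 : ∀ x, deriv (fun w => deriv f w - c * w) x = 0 := by
        intro x
        have hD : HasDerivAt (fun w => deriv f w - c * w) (deriv (deriv f) x - c) x := by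
          simpa [Pi.sub_def] using ((hd1 x).hasDerivAt.sub ((hasDerivAt_id x).const_mul c))
        rw [hD.deriv, hcc x, sub_self]
      have hcst := is_const_of_deriv_eq_zero hF hF0 w 0
      rw [he]
      linear_combination hcst
    have h6 : ∀ w, f w = c / 2 * w ^ 2 + e * w + f 0 := by
      intro w
      have hF : Differentiable ℂ (fun w : ℂ => f w - c / 2 * w ^ 2 - e * w) :=
        (hf.sub ((differentiable_pow 2).const_mul (c / 2))).sub (differentiable_id.const_mul e)
      have hF0 : ∀ x, deriv (fun w : ℂ => f w - c / 2 * w ^ 2 - e * w) x = 0 := by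
        intro x
        have hD : HasDerivAt (fun w : ℂ => f w - c / 2 * w ^ 2 - e * w)
            (deriv f x - c / 2 * (2 * x) - e) x := by
          have h0 := ((hf x).hasDerivAt.sub ((hasDerivAt_pow 2 x).const_mul (c / 2))).sub
            ((hasDerivAt_id x).const_mul e)
          simpa [Pi.sub_def] using h0
        rw [hD.deriv, h5 x]
        ring
      have hcst := is_const_of_deriv_eq_zero hF hF0 w 0
      linear_combination hcst
    by_cases hc0 : c = 0
    · exact ⟨e, f 0, fun w => by rw [h6 w, hc0]; ring⟩
    · exfalso
      have habsc : (0:ℝ) < ‖c‖ := norm_pos_iff.mpr hc0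
      set w0 : ℂ := Complex.I * ((‖c‖ : ℝ) : ℂ) / c with hw0def
      have hw0 : w0 ≠ 0 := by
        rw [hw0def]
        apply div_ne_zero _ hc0
        exact mul_ne_zero Complex.I_ne_zero (Complex.ofReal_ne_zero.mpr (ne_of_gt habsc))
      set ω := Complex.exp (Complex.log w0 / 2) with hωdef
      have hω2 : ω ^ 2 = w0 := by
        rw [hωdef, sq, ← Complex.exp_add,
          show Complex.log w0 / 2 + Complex.log w0 / 2 = Complex.log w0 by ring]
        exact Complex.exp_log hw0
      have habsw0 : ‖w0‖ = 1 := by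
        rw [hw0def, norm_div, norm_mul, Complex.norm_I, Complex.norm_real, Real.norm_eq_abs, one_mul,
          _root_.abs_of_pos habsc, div_self (ne_of_gt habsc)]
      have hωabs : ‖ω‖ = 1 := by
        have h2 : ‖ω‖ ^ 2 = 1 := by rw [← norm_pow, hω2, habsw0]
        nlinarith [norm_nonneg ω]
      set ζ₀ : ℂ := -e / c with hζ₀def
      have hkey1 : c * ζ₀ = -e := by rw [hζ₀def]; field_simp
      have hkey2 : c * ω ^ 2 = Complex.I * ((‖c‖ : ℝ) : ℂ) := by
        rw [hω2, hw0def]; field_simp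
      have hK : ∀ t : ℝ, f (ζ₀ + t * ω) = f ζ₀ + Complex.I * (((‖c‖ / 2 * t ^ 2 : ℝ)) : ℂ) := by
        intro t
        rw [h6 (ζ₀ + t * ω), h6 ζ₀]
        push_cast
        linear_combination ((t : ℂ) * ω) * hkey1 + ((t : ℂ) ^ 2 / 2) * hkey2
      have hRe : ∀ t : ℝ, (f (ζ₀ + t * ω)).re = (f ζ₀).re := by
        intro t; rw [hK t]
        simp only [Complex.add_re, Complex.mul_re, Complex.I_re, Complex.I_im,
          Complex.ofReal_re, Complex.ofReal_im]
        ring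
      have hderiv : ∀ t : ℝ, 0 ≤ t →
          ‖deriv f (ζ₀ + t * ω)‖ = ‖c‖ * t := by
        intro t ht
        rw [h5 (ζ₀ + t * ω),
          show c * (ζ₀ + (t : ℂ) * ω) + e = c * ω * (t : ℂ) by linear_combination hkey1]
        rw [norm_mul, norm_mul, hωabs, Complex.norm_real, Real.norm_eq_abs, mul_one,
          _root_.abs_of_nonneg ht]
      set t₀ : ℝ := (M * Real.cosh ((f ζ₀).re) ^ 2 + 1) / ‖c‖ with ht₀def
      have hcoshpos := Real.cosh_pos ((f ζ₀).re)
      have ht₀pos : 0 ≤ t₀ := by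
        rw [ht₀def]
        apply div_nonneg _ (le_of_lt habsc)
        nlinarith
      have hcontra := hbd (ζ₀ + t₀ * ω)
      rw [hderiv t₀ ht₀pos, hRe t₀] at hcontra
      have ht₀eq : ‖c‖ * t₀ = M * Real.cosh ((f ζ₀).re) ^ 2 + 1 := by
        rw [ht₀def]; field_simp
      rw [ht₀eq] at hcontra
      linarith
  · have hne : ∀ w, (f w).re ≠ 0 := by
      intro w hw
      exact hZ ⟨w, hw⟩
    have hsign : ∀ (g : ℂ → ℂ), Differentiable ℂ g → (∀ w, (g w).re ≠ 0) →
        0 < (g 0).re → ∀ w, 0 < (g w).re := by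
      intro g hg hgne hg0 w
      apply pos_on_ball hg hg0 (r := dist 0 w + 1) (fun x _ => hgne x) w
      rw [mem_ball, dist_comm]
      linarith [dist_nonneg (x := (0:ℂ)) (y := w)]
    rcases lt_or_gt_of_ne (hne 0) with hneg | hposs
    · -- Re f < 0 everywhere; exp f is bounded
      have hupos : ∀ w, (f w).re < 0 := by
        intro w
        have hgd : Differentiable ℂ (fun w => -(f w)) := hf.neg
        have h := hsign (fun w => -(f w)) hgd
          (fun x hx => hne x (by simpa [neg_eq_zero] using hx))
          (by simp only [Complex.neg_re]; linarith) w
        simp only [Complex.neg_re] at h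
        linarith
      have hEd : Differentiable ℂ (fun w => Complex.exp (f w)) := hf.cexp
      have hEb : Bornology.IsBounded (Set.range (fun w => Complex.exp (f w))) := by
        rw [isBounded_iff_forall_norm_le]
        refine ⟨1, ?_⟩
        rintro x ⟨w, rfl⟩
        rw [Complex.norm_exp]
        calc Real.exp ((f w).re) ≤ Real.exp 0 := Real.exp_le_exp.2 (le_of_lt (hupos w))
          _ = 1 := Real.exp_zero
      have hEc : ∀ w, Complex.exp (f w) = Complex.exp (f 0) := fun w =>
        hEd.apply_eq_apply_of_bounded hEb w 0
      have hf'0 : ∀ w, deriv f w = 0 := by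
        intro w
        have h1 : HasDerivAt (fun w => Complex.exp (f w)) (Complex.exp (f w) * deriv f w) w :=
          (hf w).hasDerivAt.cexp
        have h2 : HasDerivAt (fun w => Complex.exp (f w)) 0 w := by
          have hEfun : (fun w => Complex.exp (f w)) = fun _ => Complex.exp (f 0) :=
            funext fun x => hEc x
          rw [hEfun]; exact hasDerivAt_const _ _
        have h3 := h1.unique h2
        rcases mul_eq_zero.1 h3 with h | h
        · exact absurd h (Complex.exp_ne_zero _)
        · exact h
      exact ⟨0, f 0, fun w => by rw [is_const_of_deriv_eq_zero hf hf'0 w 0]; ring⟩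
    · -- Re f > 0 everywhere; exp (−f) is bounded
      have hupos : ∀ w, 0 < (f w).re := hsign f hf hne hposs
      have hEd : Differentiable ℂ (fun w => Complex.exp (-(f w))) := hf.neg.cexp
      have hEb : Bornology.IsBounded (Set.range (fun w => Complex.exp (-(f w)))) := by
        rw [isBounded_iff_forall_norm_le]
        refine ⟨1, ?_⟩
        rintro x ⟨w, rfl⟩
        rw [Complex.norm_exp]
        calc Real.exp ((-(f w)).re) ≤ Real.exp 0 := by
              apply Real.exp_le_exp.2
              simp only [Complex.neg_re]
              linarith [hupos w]
          _ = 1 := Real.exp_zero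
      have hEc : ∀ w, Complex.exp (-(f w)) = Complex.exp (-(f 0)) := fun w =>
        hEd.apply_eq_apply_of_bounded hEb w 0
      have hf'0 : ∀ w, deriv f w = 0 := by
        intro w
        have h1 : HasDerivAt (fun w => Complex.exp (-(f w)))
            (Complex.exp (-(f w)) * -(deriv f w)) w := ((hf w).hasDerivAt.neg).cexp
        have h2 : HasDerivAt (fun w => Complex.exp (-(f w))) 0 w := by
          have hEfun : (fun w => Complex.exp (-(f w))) = fun _ => Complex.exp (-(f 0)) :=
            funext fun x => hEc x
          rw [hEfun]; exact hasDerivAt_const _ _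
        have h3 := h1.unique h2
        rcases mul_eq_zero.1 h3 with h | h
        · exact absurd h (Complex.exp_ne_zero _)
        · simpa [neg_eq_zero] using h
      exact ⟨0, f 0, fun w => by rw [is_const_of_deriv_eq_zero hf hf'0 w 0]; ring⟩

end GaussAux

open GaussAux in
theorem stmt_17 (f : ℂ → ℂ) (hf : Differentiable ℂ f) :
    ((∃ C : ℝ, ∀ z : ℂ, |gaussCurv f z| ≤ C) ↔
      (∃ C : ℝ, ∀ z : ℂ, ‖deriv f z‖ / Real.cosh ((f z).re) ^ 2 ≤ C)) ∧
    ((¬ ∃ a b : ℂ, ∀ z : ℂ, f z = a * z + b) → ¬ ∃ C : ℝ, ∀ z : ℂ, |gaussCurv f z| ≤ C) ∧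
    (∀ a b : ℂ, a ≠ 0 → (∀ z : ℂ, f z = a * z + b) →
      ∃ C : ℝ, ∀ z : ℂ, |gaussCurv f z| ≤ C) := by
  have hq : ∀ z : ℂ, (0:ℝ) ≤ ‖deriv f z‖ / Real.cosh ((f z).re) ^ 2 := by
    intro z
    apply div_nonneg (norm_nonneg _)
    positivity
  have hiff : (∃ C : ℝ, ∀ z : ℂ, |gaussCurv f z| ≤ C) ↔
      (∃ C : ℝ, ∀ z : ℂ, ‖deriv f z‖ / Real.cosh ((f z).re) ^ 2 ≤ C) := by
    constructor
    · rintro ⟨C, hC⟩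
      refine ⟨Real.sqrt C, fun z => ?_⟩
      have h := hC z
      rw [abs_gaussCurv hf] at h
      calc ‖deriv f z‖ / Real.cosh ((f z).re) ^ 2
          = Real.sqrt ((‖deriv f z‖ / Real.cosh ((f z).re) ^ 2) ^ 2) :=
            (Real.sqrt_sq (hq z)).symm
        _ ≤ Real.sqrt C := Real.sqrt_le_sqrt h
    · rintro ⟨C, hC⟩
      refine ⟨C ^ 2, fun z => ?_⟩
      rw [abs_gaussCurv hf]
      exact pow_le_pow_left₀ (hq z) (hC z) 2
  refine ⟨hiff, ?_, ?_⟩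
  · intro hnl hK
    apply hnl
    obtain ⟨C, hC⟩ := hiff.1 hK
    have hC0 : 0 ≤ C := le_trans (hq 0) (hC 0)
    have hM : (0:ℝ) < C + 1 := by linarith
    have hbd : ∀ z, ‖deriv f z‖ ≤ (C + 1) * Real.cosh ((f z).re) ^ 2 := by
      intro z
      have h := hC z
      have hcp : (0:ℝ) < Real.cosh ((f z).re) ^ 2 := by positivity
      rw [div_le_iff₀ hcp] at h
      nlinarith
    exact affine_of_bound hf hM hbd
  · intro a b ha hfab
    have hfe : f = fun z => a * z + b := funext hfab
    have hd : ∀ z, deriv f z = a := by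
      intro z
      rw [hfe]
      have : HasDerivAt (fun z : ℂ => a * z + b) (a * 1) z :=
        ((hasDerivAt_id z).const_mul a).add_const b
      rw [this.deriv, mul_one]
    refine ⟨‖a‖ ^ 2, fun z => ?_⟩
    rw [abs_gaussCurv hf, hd z]
    have h1 : (1:ℝ) ≤ Real.cosh ((f z).re) ^ 2 := by
      nlinarith [Real.one_le_cosh ((f z).re)]
    have h2 : ‖a‖ / Real.cosh ((f z).re) ^ 2 ≤ ‖a‖ :=
      div_le_self (norm_nonneg _) h1
    exact pow_le_pow_left₀ (div_nonneg (norm_nonneg _) (by positivity)) h2 2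
end
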